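/- Let X be a Tychonoff space, P pseudocompactness, and λ_P X = ⋃ { int_{βX} cl_{βX} C : C cozero in X with cl_X C pseudocompact }. Then λ_P X = int_{βX} υX. -/

import Mathlib

def IsPseudocompactSpace (Y : Type) [TopologicalSpace Y] : Prop :=
  ∀ f : Y → ℝ, Continuous f → ∃ M : ℝ, ∀ y : Y, |f y| ≤ M

def IsCoz {X : Type} [TopologicalSpace X] (C : Set X) : Prop :=
  ∃ f : X → ℝ, Continuous f ∧ C = {x | f x ≠ 0}

def hewitt (X : Type) [TopologicalSpace X] : Set (StoneCech X) :=
  ⋂₀ {C : Set (StoneCech X) |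
      (∃ f : StoneCech X → ℝ, Continuous f ∧ C = {x | f x ≠ 0}) ∧
        Set.range (stoneCechUnit : X → StoneCech X) ⊆ C}

/-!
If `cl_X C` is pseudocompact, then for every continuous `g` on `βX` without zeros on `X`, `1 / |g|`
is bounded on `C`, so `|g|` is bounded away from `0` on `cl_{βX} C` and `cl_{βX} C ⊆ υX`.
Conversely, if `C` is open and `cl_{βX} C ⊆ υX`, an unbounded function on `cl_X C` yields a locally
finite sequence of nonempty open sets `V n ⊆ C`; summing bump functions gives `σ` on `X` with
`σ ≥ n` at a point `y n ∈ V n`. A cluster point `q` of `(y n)` in `βX` lies in `cl_{βX} C`, yet the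
extension of `1 / (1 + |σ|)` vanishes at `q`, so `q ∉ υX`.

For `p ∈ int_{βX} υX`, an Urysohn function `f` with `f p = 0` and `f = 1` off `int_{βX} υX` gives
the cozero set `C = {f < 1/2} ∩ X`, whose closure in `βX` contains a neighbourhood of `p` and lies
in `υX`.
-/

open Set Filter Topology

section

variable {X : Type} [TopologicalSpace X]

theorem LocallyFinite.image_val_of_isClosed {ι : Type*} {A : Set X} (hA : IsClosed A)
    {f : ι → Set A} (hf : LocallyFinite f) : LocallyFinite fun i => ((↑) : A → X) '' f i := by
  intro x
  by_cases hx : x ∈ A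
  · obtain ⟨t, ht, hfin⟩ := hf ⟨x, hx⟩
    obtain ⟨u, hu, hut⟩ := (mem_nhds_subtype A _ t).1 ht
    refine ⟨u, hu, hfin.subset ?_⟩
    rintro i ⟨_, ⟨a, hai, rfl⟩, hau⟩
    exact ⟨a, hai, hut hau⟩
  · refine ⟨Aᶜ, hA.isOpen_compl.mem_nhds hx, finite_empty.subset ?_⟩
    rintro i ⟨_, ⟨a, -, rfl⟩, haA⟩
    exact haA a.2

theorem locallyFinite_setOf_natCast_lt {f : X → ℝ} (hf : Continuous f) :
    LocallyFinite fun n : ℕ => {x | (n : ℝ) < f x} := by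
  intro x
  obtain ⟨N, hN⟩ := exists_nat_gt (f x)
  refine ⟨{z | f z < N}, (isOpen_lt hf continuous_const).mem_nhds hN, (finite_Iio N).subset ?_⟩
  rintro n ⟨z, hnz, hzN⟩
  exact_mod_cast (show (n : ℝ) < N from hnz.trans hzN)

theorem exists_locallyFinite_nonempty_isOpen_subset_of_unbounded {C : Set X} (hC : IsOpen C)
    {f : closure C → ℝ} (hf : Continuous f) (hunb : ∀ M, ∃ y, M < f y) :
    ∃ V : ℕ → Set X, (∀ n, IsOpen (V n)) ∧ (∀ n, V n ⊆ C) ∧ (∀ n, (V n).Nonempty) ∧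
      LocallyFinite V := by
  choose O hO hOf using fun n : ℕ =>
    isOpen_induced_iff.1 (isOpen_lt (continuous_const (y := (n : ℝ))) hf)
  refine ⟨fun n => O n ∩ C, fun n => (hO n).inter hC, fun n => inter_subset_right, fun n => ?_, ?_⟩
  · obtain ⟨y, hy⟩ := hunb n
    have hyO : (y : X) ∈ O n := by rw [← mem_preimage, hOf]; exact hy
    exact mem_closure_iff.1 y.2 _ (hO n) hyO
  · refine ((locallyFinite_setOf_natCast_lt hf).image_val_of_isClosed isClosed_closure).subset ?_
    rintro n x ⟨hxO, hxC⟩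
    refine ⟨⟨x, subset_closure hxC⟩, ?_, rfl⟩
    rw [← hOf]
    exact hxO

theorem exists_continuous_nonneg_eq_one_support_subset [CompletelyRegularSpace X] {U : Set X}
    (hU : IsOpen U) {x : X} (hx : x ∈ U) :
    ∃ φ : X → ℝ, Continuous φ ∧ 0 ≤ φ ∧ φ x = 1 ∧ Function.support φ ⊆ U := by
  obtain ⟨ψ, hψ, hψx, hψU⟩ := CompletelyRegularSpace.completely_regular_isOpen x U hU hx
  refine ⟨fun y => 1 - ψ y, continuous_const.sub (continuous_subtype_val.comp hψ),
    fun y => sub_nonneg.2 (ψ y).2.2, by simp [hψx], fun y hy => ?_⟩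
  by_contra hyU
  exact hy (by simp [show ψ y = 1 from hψU hyU])

theorem exists_continuous_natCast_le_of_locallyFinite [CompletelyRegularSpace X]
    {V : ℕ → Set X} (hVo : ∀ n, IsOpen (V n)) (hV : LocallyFinite V) {y : ℕ → X}
    (hy : ∀ n, y n ∈ V n) : ∃ σ : X → ℝ, Continuous σ ∧ ∀ n : ℕ, n ≤ σ (y n) := by
  choose φ hφ hφ0 hφy hφV using fun n =>
    exists_continuous_nonneg_eq_one_support_subset (hVo n) (hy n)
  have hsupp : LocallyFinite fun n : ℕ => Function.support fun x => (n : ℝ) * φ n x :=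
    hV.subset fun n => (Function.support_mul_subset_right _ _).trans (hφV n)
  refine ⟨fun x => ∑ᶠ n : ℕ, (n : ℝ) * φ n x,
    continuous_finsum (fun n => continuous_const.mul (hφ n)) hsupp, fun n => ?_⟩
  simpa [hφy n] using single_le_finsum n (hsupp.point_finite (y n))
    fun j => mul_nonneg j.cast_nonneg (hφ0 j (y n))

theorem isCoz_setOf_lt {f : X → ℝ} (hf : Continuous f) (a : ℝ) :
    IsCoz {x | f x < a} := by
  refine ⟨fun x => max (a - f x) 0, (continuous_const.sub hf).max continuous_const, ?_⟩
  ext x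
  simp only [mem_ofPred_eq, ne_eq, max_eq_right_iff, not_le, sub_pos]

theorem mem_hewitt_iff {q : StoneCech X} :
    q ∈ hewitt X ↔
      ∀ g : StoneCech X → ℝ, Continuous g → (∀ x, g (stoneCechUnit x) ≠ 0) → g q ≠ 0 := by
  simp only [hewitt, mem_sInter, mem_ofPred_eq, and_imp, forall_exists_index]
  constructor
  · intro h g hg hgX
    exact h _ g hg rfl (range_subset_iff.2 hgX)
  · rintro h _ g hg rfl hgX
    exact h g hg fun x => hgX (mem_range_self x)

theorem closure_image_stoneCechUnit_subset_hewitt {C : Set X}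
    (hC : IsPseudocompactSpace (closure C)) : closure (stoneCechUnit '' C) ⊆ hewitt X := by
  intro q hq
  refine mem_hewitt_iff.2 fun g hg hgX hgq => ?_
  have hgC : Continuous fun y : closure C => g (stoneCechUnit y.1) :=
    hg.comp (continuous_stoneCechUnit.comp continuous_subtype_val)
  obtain ⟨M, hM⟩ := hC _ (hgC.abs.inv₀ fun y => abs_ne_zero.2 (hgX y))
  have hsub : stoneCechUnit '' C ⊆ {z | 1 ≤ M * |g z|} := by
    rintro _ ⟨x, hx, rfl⟩
    have hMx := hM ⟨x, subset_closure hx⟩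
    rw [Pi.inv_apply, abs_inv, abs_abs] at hMx
    exact (inv_le_iff_one_le_mul₀ (abs_pos.2 (hgX x))).1 hMx
  have hq1 := closure_minimal hsub (isClosed_le continuous_const (continuous_const.mul hg.abs)) hq
  norm_num [hgq] at hq1

theorem notMem_hewitt_of_mapClusterPt {σ : X → ℝ} (hσ : Continuous σ) {u : ℕ → X}
    (hu : Tendsto (σ ∘ u) atTop atTop) {q : StoneCech X}
    (hq : MapClusterPt q atTop (stoneCechUnit ∘ u)) : q ∉ hewitt X := by
  have hpos : ∀ x, 0 < 1 + |σ x| := fun x => by positivity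
  let v : X → unitInterval := fun x =>
    ⟨(1 + |σ x|)⁻¹, inv_nonneg.2 (hpos x).le, inv_le_one_of_one_le₀ (by simp)⟩
  have hv : Continuous v :=
    ((continuous_const.add hσ.abs).inv₀ fun x => (hpos x).ne').subtype_mk _
  let g : StoneCech X → ℝ := fun z => ((stoneCechExtend hv z : unitInterval) : ℝ)
  have hg : Continuous g := continuous_subtype_val.comp (continuous_stoneCechExtend hv)
  have hgX : ∀ x, g (stoneCechUnit x) = (1 + |σ x|)⁻¹ := fun x =>
    congrArg Subtype.val (stoneCechExtend_stoneCechUnit hv x)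
  have hlim : Tendsto (g ∘ stoneCechUnit ∘ u) atTop (𝓝 0) := by
    simpa only [Function.comp_def, hgX] using tendsto_inv_atTop_zero.comp
      (tendsto_atTop_add_const_left _ 1 (tendsto_abs_atTop_atTop.comp hu))
  have hgq : g q = 0 :=
    eq_of_nhds_neBot ((hq.continuousAt_comp hg.continuousAt).clusterPt.mono hlim)
  exact fun hqυ => mem_hewitt_iff.1 hqυ g hg (fun x => by simp [hgX, (hpos x).ne']) hgq

theorem isPseudocompactSpace_closure_of_closure_image_subset_hewitt [CompletelyRegularSpace X]
    {C : Set X} (hC : IsOpen C) (hCυ : closure (stoneCechUnit '' C) ⊆ hewitt X) :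
    IsPseudocompactSpace (closure C) := by
  intro h hh
  by_contra! hunb
  obtain ⟨V, hVo, hVC, hVne, hV⟩ := exists_locallyFinite_nonempty_isOpen_subset_of_unbounded hC hh.abs hunb
  choose y hy using hVne
  obtain ⟨σ, hσ, hσy⟩ := exists_continuous_natCast_le_of_locallyFinite hVo hV hy
  obtain ⟨q, -, hq⟩ := isCompact_univ.exists_mapClusterPt (f := atTop)
    (u := stoneCechUnit ∘ y) (by simp)
  have hqC : q ∈ closure (stoneCechUnit '' C) := by
    refine closure_mono ?_ (mapClusterPt_atTop_iff_forall_mem_closure.1 hq 0)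
    rintro _ ⟨n, -, rfl⟩
    exact mem_image_of_mem _ (hVC n (hy n))
  exact notMem_hewitt_of_mapClusterPt hσ
    (tendsto_atTop_mono hσy tendsto_natCast_atTop_atTop) hq (hCυ hqC)

end

/-- for `P` pseudocompactness, `λ_P X = int_{βX} υX`. -/
theorem stmt9 (X : Type) [TopologicalSpace X] [T35Space X] :
    (⋃₀ {V : Set (StoneCech X) |
        ∃ C : Set X, IsCoz C ∧ IsPseudocompactSpace ↥(closure C) ∧
          V = interior (closure (stoneCechUnit '' C))}) =
      interior (hewitt X) := by
  refine Subset.antisymm (sUnion_subset ?_) fun p hp => ?_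
  · rintro _ ⟨C, -, hC, rfl⟩
    exact interior_mono (closure_image_stoneCechUnit_subset_hewitt hC)
  obtain ⟨f, hfp, hf1, -⟩ := exists_continuous_zero_one_of_isClosed isClosed_singleton
    isOpen_interior.isClosed_compl (disjoint_singleton_left.2 (not_not.2 hp))
  set W : Set (StoneCech X) := {z | f z < 1 / 2}
  have hWo : IsOpen W := isOpen_lt f.continuous continuous_const
  have hWυ : closure W ⊆ hewitt X := by
    refine (closure_lt_subset_le f.continuous continuous_const).trans fun z hz => interior_subset ?_
    by_contra hzυ
    norm_num [show f z = 1 from hf1 hzυ] at hz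
  refine ⟨_, ⟨stoneCechUnit ⁻¹' W, isCoz_setOf_lt (f.continuous.comp continuous_stoneCechUnit) _,
    isPseudocompactSpace_closure_of_closure_image_subset_hewitt
      (hWo.preimage continuous_stoneCechUnit)
      ((closure_mono (image_preimage_subset _ _)).trans hWυ), rfl⟩, ?_⟩
  exact interior_maximal (denseRange_stoneCechUnit.subset_closure_image_preimage_of_isOpen hWo) hWo
    (by simp [W, hfp rfl])
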